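/- Let β > 0, s ∈ (0, 1), k ∈ ℕ, 0 < r < R, and let Y ⊂ ℝ be a finite set with r < |y| ≤ R for every y ∈ Y. Then the function Ψ(x) := β · ( Σ_{1 ≤ i < j ≤ k} (x_j − x_i)^{−s} + Σ_{i=1}^k Σ_{y ∈ Y} ( |x_i − y|^{−s} − |y|^{−s} ) ) is convex on the chamber C_r^k := {x ∈ ℝ^k : −r ≤ x_1 < x_2 < ⋯ < x_k ≤ r}. -/

import Mathlib

/-!
Each summand of `Ψ` is the convex function `t ↦ t ^ (-s)` of `(0, ∞)` composed with an affine
function that is positive on the chamber: `x j - x i` for `i < j`, and `x i - y` or `y - x i`,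
because `|y| > r` keeps each exterior particle `y` on one side of `[-r, r]`. The chamber itself is
an intersection of half-spaces and a box, hence convex.
-/

open Set Real

theorem ConvexOn.sum {𝕜 E ι : Type*} [Field 𝕜] [LinearOrder 𝕜] [IsStrictOrderedRing 𝕜]
    [AddCommGroup E] [Module 𝕜 E] {s : Set E} (hs : Convex 𝕜 s) {t : Finset ι} {f : ι → E → 𝕜}
    (hf : ∀ i ∈ t, ConvexOn 𝕜 s (f i)) : ConvexOn 𝕜 s fun x => ∑ i ∈ t, f i x := by
  induction t using Finset.cons_induction with
  | empty => simpa using convexOn_const (0 : 𝕜) hs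
  | cons j t _ ih =>
    simp only [Finset.sum_cons]
    exact (hf j (Finset.mem_cons_self j t)).add (ih fun i hi => hf i (Finset.mem_cons_of_mem hi))

theorem convex_setOf_strictMono {𝕜 ι : Type*} [Field 𝕜] [LinearOrder 𝕜] [IsStrictOrderedRing 𝕜]
    [Preorder ι] : Convex 𝕜 {x : ι → 𝕜 | StrictMono x} := by
  have hset : {x : ι → 𝕜 | StrictMono x} = ⋂ i, ⋂ j, ⋂ (_ : i < j), {x | x i - x j < 0} := by
    ext x
    simp [StrictMono]
  rw [hset]
  refine convex_iInter fun i => convex_iInter fun j => convex_iInter fun _ => ?_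
  exact convex_halfSpace_lt
    (LinearMap.proj (R := 𝕜) (φ := fun _ : ι => 𝕜) i - LinearMap.proj j).isLinear 0

theorem Convex.setOf_strictMono_and_forall_mem {𝕜 ι : Type*} [Field 𝕜] [LinearOrder 𝕜]
    [IsStrictOrderedRing 𝕜] [Preorder ι] {I : Set 𝕜} (hI : Convex 𝕜 I) :
    Convex 𝕜 {x : ι → 𝕜 | StrictMono x ∧ ∀ i, x i ∈ I} := by
  have hbox : Convex 𝕜 {x : ι → 𝕜 | ∀ i, x i ∈ I} := by
    simpa only [Set.pi, mem_univ, true_imp_iff] using convex_pi (s := univ) fun (_ : ι) _ => hI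
  exact convex_setOf_strictMono.inter hbox

/-- `t ^ (-s) = exp (-s log t)` is an increasing convex function of a convex function. -/
theorem convexOn_rpow_neg {s : ℝ} (hs : 0 ≤ s) : ConvexOn ℝ (Ioi 0) fun t : ℝ => t ^ (-s) := by
  refine ⟨convex_Ioi 0, fun x hx y hy a b ha hb hab => ?_⟩
  have hlog := ((strictConcaveOn_log_Ioi.concaveOn.neg).smul hs).2 hx hy ha hb hab
  simp only [smul_eq_mul, Pi.neg_apply] at hlog ⊢
  have hxy : 0 < a * x + b * y := (convex_Ioi 0) hx hy ha hb hab
  rw [rpow_def_of_pos hxy, rpow_def_of_pos hx, rpow_def_of_pos hy]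
  calc exp (log (a * x + b * y) * -s)
      ≤ exp (a * (s * -log x) + b * (s * -log y)) := exp_le_exp.2 (by linarith)
    _ ≤ a * exp (s * -log x) + b * exp (s * -log y) :=
        convexOn_exp.2 (mem_univ _) (mem_univ _) ha hb hab
    _ = a * exp (log x * -s) + b * exp (log y * -s) := by ring_nf

theorem Convex.subset_Ioi_or_subset_Iio_of_notMem {𝕜 : Type*} [Field 𝕜] [LinearOrder 𝕜]
    [IsStrictOrderedRing 𝕜] {I : Set 𝕜} (hI : Convex 𝕜 I) {y : 𝕜} (hy : y ∉ I) :
    I ⊆ Ioi y ∨ I ⊆ Iio y := by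
  refine or_iff_not_imp_left.2 fun h b hb => ?_
  obtain ⟨a, ha, hay⟩ := not_subset.1 h
  refine lt_of_le_of_ne (not_lt.1 fun hyb => hy ?_) (ne_of_mem_of_not_mem hb hy)
  exact hI.ordConnected.out ha hb ⟨not_lt.1 hay, hyb.le⟩

theorem convexOn_abs_sub_rpow_neg {s y : ℝ} (hs : 0 ≤ s) {I : Set ℝ} (hI : Convex ℝ I)
    (hy : y ∉ I) : ConvexOn ℝ I fun t => |t - y| ^ (-s) := by
  rcases hI.subset_Ioi_or_subset_Iio_of_notMem hy with hIy | hIy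
  · refine ((convexOn_rpow_neg hs).comp_affineMap
      (AffineMap.id ℝ ℝ - AffineMap.const ℝ ℝ y)).subset (fun t ht => ?_) hI |>.congr ?_
    · exact sub_pos.2 (show y < t from hIy ht)
    · intro t ht
      show (t - y) ^ (-s) = |t - y| ^ (-s)
      rw [abs_of_pos (sub_pos.2 (show y < t from hIy ht))]
  · refine ((convexOn_rpow_neg hs).comp_affineMap
      (AffineMap.const ℝ ℝ y - AffineMap.id ℝ ℝ)).subset (fun t ht => ?_) hI |>.congr ?_
    · exact sub_pos.2 (show t < y from hIy ht)
    · intro t ht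
      show (y - t) ^ (-s) = |t - y| ^ (-s)
      rw [abs_sub_comm, abs_of_pos (sub_pos.2 (show t < y from hIy ht))]

theorem riesz_hamiltonian_convexOn_general (β : ℝ) (hβ : 0 < β)
    (s : ℝ) (hs : s ∈ Set.Ioo (0 : ℝ) 1) (k : ℕ)
    (r R : ℝ)
    (Y : Finset ℝ) (hY : ∀ y ∈ Y, r < |y| ∧ |y| ≤ R) :
    ConvexOn ℝ
      {x : Fin k → ℝ | StrictMono x ∧ ∀ i, x i ∈ Set.Icc (-r) r}
      (fun x : Fin k → ℝ =>
        β * ((∑ p ∈ Finset.univ.filter (fun p : Fin k × Fin k => p.1 < p.2),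
              (x p.2 - x p.1) ^ (-s))
          + ∑ i : Fin k, ∑ y ∈ Y, (|x i - y| ^ (-s) - |y| ^ (-s)))) := by
  set C := {x : Fin k → ℝ | StrictMono x ∧ ∀ i, x i ∈ Set.Icc (-r) r}
  have hC : Convex ℝ C := (convex_Icc (-r) r).setOf_strictMono_and_forall_mem
  have hs0 : 0 ≤ s := hs.1.le
  let proj : Fin k → (Fin k → ℝ) →ₗ[ℝ] ℝ := LinearMap.proj
  have hpairs : ConvexOn ℝ C fun x => ∑ p ∈ Finset.univ.filter (fun p : Fin k × Fin k => p.1 < p.2),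
      (x p.2 - x p.1) ^ (-s) := ConvexOn.sum hC fun p hp =>
    ((convexOn_rpow_neg hs0).comp_linearMap (proj p.2 - proj p.1)).subset
      (fun x hx => show (0 : ℝ) < x p.2 - x p.1 from sub_pos.2 (hx.1 (Finset.mem_filter.1 hp).2)) hC
  have hexterior : ConvexOn ℝ C fun x => ∑ i : Fin k, ∑ y ∈ Y, (|x i - y| ^ (-s) - |y| ^ (-s)) :=
    ConvexOn.sum hC fun i _ => ConvexOn.sum hC fun y hy => by
      have hy' : y ∉ Icc (-r) r := fun h => (hY y hy).1.not_ge (abs_le.2 h)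
      exact (((convexOn_abs_sub_rpow_neg hs0 (convex_Icc _ _) hy').comp_linearMap
        (proj i)).subset (fun x hx => hx.2 i) hC).sub (concaveOn_const _ hC)
  exact (hpairs.add hexterior).smul hβ.le

/-- Chamber formulation of the geodesic convexity of the truncated conditional
Hamiltonian of the β-Riesz gas with kernel `g(x) = |x|^{-s}`, `s ∈ (0,1)`:
`Ψ x = β (∑_{i<j} (x j - x i)^{-s} + ∑_i ∑_{y ∈ Y} (|x i - y|^{-s} - |y|^{-s}))`
is convex on the Weyl chamber `{x : -r ≤ x 1 < x 2 < ⋯ < x k ≤ r}`. -/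
theorem riesz_hamiltonian_convexOn (β : ℝ) (hβ : 0 < β)
    (s : ℝ) (hs : s ∈ Set.Ioo (0 : ℝ) 1) (k : ℕ)
    (r R : ℝ) (hr : 0 < r) (hrR : r < R)
    (Y : Finset ℝ) (hY : ∀ y ∈ Y, r < |y| ∧ |y| ≤ R) :
    ConvexOn ℝ
      {x : Fin k → ℝ | StrictMono x ∧ ∀ i, x i ∈ Set.Icc (-r) r}
      (fun x : Fin k → ℝ =>
        β * ((∑ p ∈ Finset.univ.filter (fun p : Fin k × Fin k => p.1 < p.2),
              (x p.2 - x p.1) ^ (-s))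
          + ∑ i : Fin k, ∑ y ∈ Y, (|x i - y| ^ (-s) - |y| ^ (-s)))) :=
  riesz_hamiltonian_convexOn_general β hβ s hs k r R Y hY
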